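/- The following are equivalent for a face F of 𝒜: (i) F ⊆ B; (ii) F(H) ≥ 0 for every wall H of B; (iii) F(H) ≥ 0 for all H ∈ 𝒜. -/

import Mathlib

open scoped RealInnerProductSpace Pointwise

variable {V : Type*} [NormedAddCommGroup V] [InnerProductSpace ℝ V] [FiniteDimensional ℝ V]
  {ι : Type*} [Fintype ι]

/-- The (open) complement of the union of the hyperplanes with chosen normals `e i`. -/
def arrComplement (e : ι → V) : Set V := {v | ∀ i, ⟪e i, v⟫ ≠ 0}

/-- A region of the arrangement: the closure of a connected component of the complement
of the union of the hyperplanes. -/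
def IsRegion (e : ι → V) (R : Set V) : Prop :=
  ∃ x ∈ arrComplement e, R = closure (connectedComponentIn (arrComplement e) x)

/-- The positive closed half-space bounded by the hyperplane with normal `e i`. -/
def posHalf (e : ι → V) (i : ι) : Set V := {v | 0 ≤ ⟪e i, v⟫}

/-- The negative closed half-space bounded by the hyperplane with normal `e i`. -/
def negHalf (e : ι → V) (i : ι) : Set V := {v | ⟪e i, v⟫ ≤ 0}

/-- The separation set of two regions: the (indices of) hyperplanes such that the two
regions lie in opposite closed half-spaces. -/
def sepSet (e : ι → V) (R R' : Set V) : Set ι :=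
  {i | (R ⊆ posHalf e i ∧ R' ⊆ negHalf e i) ∨ (R ⊆ negHalf e i ∧ R' ⊆ posHalf e i)}

/-- The order of the poset of regions `PR(𝒜,B)`. -/
def PRle (e : ι → V) (B R R' : Set V) : Prop := sepSet e B R ⊆ sepSet e B R'

/-- Strict order of the poset of regions. -/
def PRlt (e : ι → V) (B R R' : Set V) : Prop := PRle e B R R' ∧ R ≠ R'

/-- Cover relation in the poset of regions. -/
def PRcover (e : ι → V) (B R R' : Set V) : Prop :=
  PRlt e B R R' ∧ ¬ ∃ U, IsRegion e U ∧ PRlt e B R U ∧ PRlt e B U R'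

/-- A face of the arrangement: an intersection of a nonempty collection of regions. -/
def IsFace (e : ι → V) (F : Set V) : Prop :=
  ∃ Rs : Set (Set V), Rs.Nonempty ∧ (∀ R ∈ Rs, IsRegion e R) ∧ F = ⋂₀ Rs

/-- `[m, M]` is the facial interval of the face `F` in the poset of regions:
the regions containing `F` are exactly those between `m` and `M`. -/
def IsFacialInterval (e : ι → V) (B F m M : Set V) : Prop :=
  IsRegion e m ∧ IsRegion e M ∧
    ∀ R, IsRegion e R → (F ⊆ R ↔ (PRle e B m R ∧ PRle e B R M))

/-- The facial weak order `FW(𝒜,B)`: `F ≤ G` iff `m_F ≤ m_G` and `M_F ≤ M_G`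
in the poset of regions. -/
def FWle (e : ι → V) (B F G : Set V) : Prop :=
  ∃ mF MF mG MG, IsFacialInterval e B F mF MF ∧ IsFacialInterval e B G mG MG ∧
    PRle e B mF mG ∧ PRle e B MF MG

/-- Strict facial weak order. -/
def FWlt (e : ι → V) (B F G : Set V) : Prop := FWle e B F G ∧ F ≠ G

/-- Cover relation in the facial weak order. -/
def FWcover (e : ι → V) (B F G : Set V) : Prop :=
  FWlt e B F G ∧ ¬ ∃ X, IsFace e X ∧ FWlt e B F X ∧ FWlt e B X G

/-- Two faces have the same maximal region `M` of their facial intervals. -/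
def SameMax (e : ι → V) (B F G : Set V) : Prop :=
  ∃ m m' M, IsFacialInterval e B F m M ∧ IsFacialInterval e B G m' M

/-- Two faces have the same minimal region `m` of their facial intervals. -/
def SameMin (e : ι → V) (B F G : Set V) : Prop :=
  ∃ m M M', IsFacialInterval e B F m M ∧ IsFacialInterval e B G m M'

/-- The dimension of a face: the dimension of its linear span. -/
noncomputable def fdim (F : Set V) : ℕ := Module.finrank ℝ (Submodule.span ℝ F)

open Classical in
/-- The covector (sign vector) of a face: the sign of `⟪e i, x⟫` for `x` in the
relative interior of the face. -/
noncomputable def covec (e : ι → V) (F : Set V) (i : ι) : SignType :=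
  if ∀ x ∈ intrinsicInterior ℝ F, 0 < ⟪e i, x⟫ then 1
  else if ∀ x ∈ intrinsicInterior ℝ F, ⟪e i, x⟫ < 0 then -1
  else 0

/-- Composition of sign vectors. -/
def scomp (f g : ι → SignType) (i : ι) : SignType := if f i ≠ 0 then f i else g i

/-- The set of roots of the arrangement: the chosen normals and their opposites. -/
def roots (e : ι → V) : Set V := Set.range e ∪ Set.range (fun i => -(e i))

/-- The root inversion set of a face. -/
def rootInv (e : ι → V) (F : Set V) : Set V :=
  {v ∈ roots e | ∃ x ∈ intrinsicInterior ℝ F, ⟪x, v⟫ ≤ 0}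

/-- `H i` is a wall of the region `R`. -/
noncomputable def IsWall (e : ι → V) (R : Set V) (i : ι) : Prop :=
  fdim ({v : V | ⟪e i, v⟫ = 0} ∩ R) = Module.finrank ℝ V - 1

/-- A region is simplicial when the normal vectors of its walls are linearly independent. -/
def IsSimplicialRegion (e : ι → V) (R : Set V) : Prop :=
  LinearIndependent ℝ (fun i : {i : ι // IsWall e R i} => e i.1)

/-- The arrangement is simplicial when all its regions are. -/
def IsSimplicial (e : ι → V) : Prop := ∀ R, IsRegion e R → IsSimplicialRegion e R

/-- The arrangement is essential when the intersection of all its hyperplanes is `{0}`. -/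
def IsEssential (e : ι → V) : Prop := (⋂ i, {v : V | ⟪e i, v⟫ = 0}) = ({0} : Set V)

/-- The poset of regions is a lattice: any two regions have a join and a meet. -/
def PRIsLattice (e : ι → V) (B : Set V) : Prop :=
  ∀ R R', IsRegion e R → IsRegion e R' →
    (∃ J, IsRegion e J ∧ PRle e B R J ∧ PRle e B R' J ∧
      ∀ U, IsRegion e U → PRle e B R U → PRle e B R' U → PRle e B J U) ∧
    (∃ M, IsRegion e M ∧ PRle e B M R ∧ PRle e B M R' ∧
      ∀ U, IsRegion e U → PRle e B U R → PRle e B U R' → PRle e B U M)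

/-!
The base region is the closed cone `B = ⋂ H, H⁺`: a region is the closure of a sign chamber,
and `B` is the one on the positive side of every hyperplane. A face `F` is convex, nonempty and
lies on one side of each hyperplane, and since a linear form that is `≤ 0` on `F` and vanishes
at a relative interior point vanishes on all of `F`, `F(H) ≥ 0` means exactly `F ⊆ H⁺`.
This gives (i) ⇔ (iii).

For (ii) ⇒ (i) it remains to see that the inequalities of the non-walls are redundant. If `v`
satisfies all wall inequalities but not some other one, follow the ray `v + t • b` towards a
generic interior point `b` of `B`; it enters `B` at a point `y` of some `H k`, genericity forces
every hyperplane through `y` to contain `H k`, so `B` contains a neighbourhood of `y` in `H k`.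
Then `H k` is a wall, and `v` violates its inequality.
-/

open Filter Topology

section General

variable {E : Type*}

theorem Submodule.span_inter_eq_of_isOpen [AddCommGroup E] [Module ℝ E] [TopologicalSpace E]
    [ContinuousAdd E] [ContinuousSMul ℝ E] {K : Submodule ℝ E} {O : Set E} (hO : IsOpen O)
    {y : E} (hyK : y ∈ K) (hyO : y ∈ O) : Submodule.span ℝ (K ∩ O) = K := by
  refine le_antisymm (Submodule.span_le.2 Set.inter_subset_left) fun u hu => ?_
  have hlim : Tendsto (fun c : ℝ => y + c • u) (𝓝[≠] 0) (𝓝 y) :=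
    (Continuous.tendsto' (by fun_prop) 0 y (by simp)).mono_left nhdsWithin_le_nhds
  obtain ⟨c, hcO, hc0⟩ := ((hlim.eventually_mem (hO.mem_nhds hyO)).and self_mem_nhdsWithin).exists
  have hy : y ∈ Submodule.span ℝ (K ∩ O) := Submodule.subset_span ⟨hyK, hyO⟩
  have hyc : y + c • u ∈ Submodule.span ℝ (K ∩ O) :=
    Submodule.subset_span ⟨K.add_mem hyK (K.smul_mem c hu), hcO⟩
  rwa [Submodule.add_mem_iff_right _ hy, Submodule.smul_mem_iff _ hc0] at hyc

variable [NormedAddCommGroup E] [InnerProductSpace ℝ E]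

theorem inner_eq_zero_of_mem_intrinsicInterior {s : Set E} {a x y : E}
    (hs : ∀ z ∈ s, ⟪a, z⟫ ≤ 0) (hx : x ∈ intrinsicInterior ℝ s) (hx0 : ⟪a, x⟫ = 0)
    (hy : y ∈ s) : ⟪a, y⟫ = 0 := by
  obtain ⟨x, hx', rfl⟩ := mem_intrinsicInterior.1 hx
  -- continue the segment from `y` to `x` slightly beyond `x`, inside `s`
  let g : ℝ → affineSpan ℝ s := fun t =>
    ⟨AffineMap.lineMap y (x : E) t, AffineMap.lineMap_mem t (subset_affineSpan ℝ s hy) x.2⟩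
  have hg : Continuous g := Continuous.subtype_mk (AffineMap.lineMap_continuous) _
  have hg1 : g 1 = x := Subtype.ext (AffineMap.lineMap_apply_one _ _)
  obtain ⟨t, hts, ht1⟩ := ((hg.tendsto' 1 x hg1).eventually_mem
    (isOpen_interior.mem_nhds hx') |>.filter_mono nhdsWithin_le_nhds |>.and
    (self_mem_nhdsWithin (s := Set.Ioi 1))).exists
  have hgt := hs _ (interior_subset (s := Subtype.val ⁻¹' s) hts)
  simp only [g, AffineMap.lineMap_apply_module, inner_add_right, real_inner_smul_right,
    hx0] at hgt
  have ht1 : (1 : ℝ) < t := ht1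
  nlinarith [hs y hy]

theorem exists_mem_forall_inner_ne_zero [FiniteDimensional ℝ E] {κ : Type*} [Finite κ]
    {w : κ → E} (hw : ∀ m, w m ≠ 0) {U : Set E} (hU : IsOpen U) (hUne : U.Nonempty) :
    ∃ b ∈ U, ∀ m, ⟪w m, b⟫ ≠ 0 := by
  have hdense : ∀ m, Dense (LinearMap.ker (innerₛₗ ℝ (w m)) : Set E)ᶜ := fun m => by
    rw [← interior_eq_empty_iff_dense_compl, Set.eq_empty_iff_forall_notMem]
    intro z hz
    have htop := (LinearMap.ker (innerₛₗ ℝ (w m))).eq_top_of_nonempty_interior' ⟨z, hz⟩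
    have hwm : w m ∈ LinearMap.ker (innerₛₗ ℝ (w m)) := htop ▸ Submodule.mem_top
    simp [hw m] at hwm
  have hopen : ∀ m, IsOpen (LinearMap.ker (innerₛₗ ℝ (w m)) : Set E)ᶜ := fun m =>
    (Submodule.closed_of_finiteDimensional _).isOpen_compl
  obtain ⟨b, hb, hbU⟩ := (dense_iInter_of_isOpen hopen hdense).exists_mem_open hU hUne
  exact ⟨b, hbU, fun m => by simpa using Set.mem_iInter.1 hb m⟩

end General

section Chambers

variable {E : Type*} [NormedAddCommGroup E] [InnerProductSpace ℝ E] {κ : Type*} (e : κ → E)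

def openChamber (x : E) : Set E := ⋂ i, {v | 0 < ⟪e i, x⟫ * ⟪e i, v⟫}

def closedChamber (x : E) : Set E := ⋂ i, {v | 0 ≤ ⟪e i, x⟫ * ⟪e i, v⟫}

variable {e}

theorem isLinearMap_mul_inner (c : ℝ) (a : E) : IsLinearMap ℝ fun v : E => c * ⟪a, v⟫ :=
  ⟨fun u v => by rw [inner_add_right, mul_add], fun r u => by
    rw [real_inner_smul_right, smul_eq_mul]; ring⟩

theorem convex_openChamber (x : E) : Convex ℝ (openChamber e x) :=
  convex_iInter fun _ => convex_halfSpace_gt (isLinearMap_mul_inner _ _) 0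

theorem convex_closedChamber (x : E) : Convex ℝ (closedChamber e x) :=
  convex_iInter fun _ => convex_halfSpace_ge (isLinearMap_mul_inner _ _) 0

theorem isClosed_closedChamber (x : E) : IsClosed (closedChamber e x) :=
  isClosed_iInter fun i => isClosed_le continuous_const (by fun_prop)

theorem mem_openChamber_self {x : E} (hx : x ∈ arrComplement e) : x ∈ openChamber e x :=
  Set.mem_iInter.2 fun i => mul_self_pos.2 (hx i)

theorem zero_mem_closedChamber (x : E) : 0 ∈ closedChamber e x :=
  Set.mem_iInter.2 fun i => by simp

theorem openChamber_subset_arrComplement (x : E) : openChamber e x ⊆ arrComplement e :=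
  fun v hv i h0 => by simpa [h0] using Set.mem_iInter.1 hv i

theorem connectedComponentIn_arrComplement {x : E} (hx : x ∈ arrComplement e) :
    connectedComponentIn (arrComplement e) x = openChamber e x := by
  refine le_antisymm (fun v hv => Set.mem_iInter.2 fun i => ?_)
    ((convex_openChamber x).isPreconnected.subset_connectedComponentIn
      (mem_openChamber_self hx) (openChamber_subset_arrComplement x))
  have hsub := connectedComponentIn_subset (arrComplement e) x
  -- the sign of `⟪e i, ·⟫` cannot change on a connected subset of the complement
  by_contra hneg
  rw [Set.mem_ofPred_eq, not_lt] at hneg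
  have hIcc : (0 : ℝ) ∈ Set.Icc (⟪e i, x⟫ * ⟪e i, v⟫) (⟪e i, x⟫ * ⟪e i, x⟫) :=
    ⟨hneg, (mul_self_pos.2 (hx i)).le⟩
  obtain ⟨z, hz, hz0⟩ := isPreconnected_connectedComponentIn.intermediate_value hv
    (mem_connectedComponentIn hx) (f := fun z => ⟪e i, x⟫ * ⟪e i, z⟫)
    (by fun_prop) hIcc
  rcases mul_eq_zero.1 hz0 with h | h
  · exact hx i h
  · exact hsub hz i h

theorem closure_openChamber {x : E} (hx : x ∈ arrComplement e) :
    closure (openChamber e x) = closedChamber e x := by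
  have hsub : openChamber e x ⊆ closedChamber e x :=
    Set.iInter_mono fun i v (hv : 0 < ⟪e i, x⟫ * ⟪e i, v⟫) => hv.le
  refine le_antisymm (closure_minimal hsub (isClosed_closedChamber x)) fun v hv => ?_
  -- `v + t • x` lies in the open chamber for every `t > 0`
  have hlim : Tendsto (fun t : ℝ => v + t • x) (𝓝[>] 0) (𝓝 v) :=
    (Continuous.tendsto' (by fun_prop) 0 v (by simp)).mono_left nhdsWithin_le_nhds
  refine mem_closure_of_tendsto hlim (eventually_nhdsWithin_of_forall fun t ht => ?_)
  refine Set.mem_iInter.2 fun i => ?_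
  have hvi : 0 ≤ ⟪e i, x⟫ * ⟪e i, v⟫ := Set.mem_iInter.1 hv i
  have hxi := mul_self_pos.2 (hx i)
  have ht : (0 : ℝ) < t := ht
  simp only [Set.mem_ofPred_eq, inner_add_right, real_inner_smul_right]
  nlinarith

theorem IsRegion.exists_eq_closedChamber {R : Set E} (hR : IsRegion e R) :
    ∃ x ∈ arrComplement e, R = closedChamber e x := by
  obtain ⟨x, hx, rfl⟩ := hR
  exact ⟨x, hx, by rw [connectedComponentIn_arrComplement hx, closure_openChamber hx]⟩

theorem closedChamber_subset_posHalf_or_subset_negHalf {x : E} (hx : x ∈ arrComplement e)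
    (i : κ) : closedChamber e x ⊆ posHalf e i ∨ closedChamber e x ⊆ negHalf e i := by
  rcases (hx i).lt_or_gt with hneg | hpos
  · exact Or.inr fun v hv => by
      have := Set.mem_iInter.1 hv i
      exact nonpos_of_mul_nonneg_right this hneg
  · exact Or.inl fun v hv => by
      have := Set.mem_iInter.1 hv i
      exact nonneg_of_mul_nonneg_right this hpos

theorem closedChamber_eq_iInter_posHalf {x : E} (hx : ∀ i, 0 < ⟪e i, x⟫) :
    closedChamber e x = ⋂ i, posHalf e i :=
  Set.iInter_congr fun i => Set.ext fun _ => mul_nonneg_iff_of_pos_left (hx i)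

end Chambers

section Faces

variable {E : Type*} [NormedAddCommGroup E] [InnerProductSpace ℝ E] {κ : Type*} {e : κ → E}

theorem IsFace.convex {F : Set E} (hF : IsFace e F) : Convex ℝ F := by
  obtain ⟨Rs, -, hRs, rfl⟩ := hF
  refine convex_sInter fun R hR => ?_
  obtain ⟨x, -, rfl⟩ := (hRs R hR).exists_eq_closedChamber
  exact convex_closedChamber x

theorem IsFace.zero_mem {F : Set E} (hF : IsFace e F) : (0 : E) ∈ F := by
  obtain ⟨Rs, -, hRs, rfl⟩ := hF
  refine Set.mem_sInter.2 fun R hR => ?_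
  obtain ⟨x, -, rfl⟩ := (hRs R hR).exists_eq_closedChamber
  exact zero_mem_closedChamber x

theorem IsFace.subset_posHalf_or_subset_negHalf {F : Set E} (hF : IsFace e F) (i : κ) :
    F ⊆ posHalf e i ∨ F ⊆ negHalf e i := by
  obtain ⟨Rs, ⟨R, hR⟩, hRs, rfl⟩ := hF
  obtain ⟨x, hx, rfl⟩ := (hRs R hR).exists_eq_closedChamber
  exact (closedChamber_subset_posHalf_or_subset_negHalf hx i).imp
    (Set.sInter_subset_of_mem hR).trans (Set.sInter_subset_of_mem hR).trans

theorem IsRegion.exists_pos_eq_iInter_posHalf {B : Set E} (hB : IsRegion e B)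
    (hBpos : ∀ i, B ⊆ posHalf e i) : ∃ b, (∀ i, 0 < ⟪e i, b⟫) ∧ B = ⋂ i, posHalf e i := by
  obtain ⟨x, hx, rfl⟩ := hB.exists_eq_closedChamber
  have hxpos : ∀ i, 0 < ⟪e i, x⟫ := fun i =>
    (hBpos i (closure_openChamber hx ▸ subset_closure (mem_openChamber_self hx))).lt_of_ne'
      (hx i)
  exact ⟨x, hxpos, closedChamber_eq_iInter_posHalf hxpos⟩

theorem covec_nonneg_iff [FiniteDimensional ℝ E] {F : Set E} {i : κ} (hconv : Convex ℝ F)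
    (hne : F.Nonempty) (hside : F ⊆ posHalf e i ∨ F ⊆ negHalf e i) :
    0 ≤ covec e F i ↔ F ⊆ posHalf e i := by
  obtain ⟨x, hx⟩ := hne.intrinsicInterior hconv
  constructor
  · intro h
    rcases hside with hpos | hneg
    · exact hpos
    obtain ⟨x', hx', hx'0⟩ : ∃ x' ∈ intrinsicInterior ℝ F, 0 ≤ ⟪e i, x'⟫ := by
      by_contra! hall
      have hcovec : covec e F i = -1 := by
        rw [covec, if_neg fun hall' => (hall' x hx).not_gt (hall x hx), if_pos hall]
      exact absurd (hcovec ▸ h) (by decide)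
    have hx'0 : ⟪e i, x'⟫ = 0 := le_antisymm (hneg (intrinsicInterior_subset hx')) hx'0
    exact fun y hy => (inner_eq_zero_of_mem_intrinsicInterior hneg hx' hx'0 hy).ge
  · intro hpos
    have hx0 : 0 ≤ ⟪e i, x⟫ := hpos (intrinsicInterior_subset hx)
    unfold covec
    split_ifs with h1 h2
    · decide
    · exact absurd (h2 x hx) hx0.not_gt
    · decide

end Faces

section Walls

variable {E : Type*} [NormedAddCommGroup E] [InnerProductSpace ℝ E] [FiniteDimensional ℝ E]
  {κ : Type*} [Finite κ] {e : κ → E}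

theorem isWall_iInter_posHalf {k : κ} (hk : e k ≠ 0) {y : E} (hy : ∀ i, 0 ≤ ⟪e i, y⟫)
    (hyk : ⟪e k, y⟫ = 0) (hact : ∀ i, ⟪e i, y⟫ = 0 → ∀ z, ⟪e k, z⟫ = 0 → ⟪e i, z⟫ = 0) :
    IsWall e (⋂ i, posHalf e i) k := by
  -- the cone contains a neighbourhood `K ∩ O` of `y` in `K = H k`, and this spans `K`
  set K := LinearMap.ker (innerₛₗ ℝ (e k))
  have hK : ∀ v, v ∈ K ↔ ⟪e k, v⟫ = 0 := fun v => by simp [K]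
  set O := ⋂ i ∈ {i | ⟪e i, y⟫ ≠ 0}, {z : E | 0 < ⟪e i, z⟫}
  have hO : IsOpen O :=
    (Set.toFinite _).isOpen_biInter fun i _ => isOpen_lt continuous_const (by fun_prop)
  have hyO : y ∈ O := Set.mem_iInter₂.2 fun i hi => (hy i).lt_of_ne' hi
  have hKO : (K : Set E) ∩ O ⊆ {v | ⟪e k, v⟫ = 0} ∩ ⋂ i, posHalf e i := by
    rintro z ⟨hzK, hzO⟩
    refine ⟨(hK z).1 hzK, Set.mem_iInter.2 fun i => ?_⟩
    by_cases hi : ⟪e i, y⟫ = 0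
    · exact (hact i hi z ((hK z).1 hzK)).ge
    · exact (show 0 < ⟪e i, z⟫ from Set.mem_iInter₂.1 hzO i hi).le
  have hspan : Submodule.span ℝ ({v | ⟪e k, v⟫ = 0} ∩ ⋂ i, posHalf e i) = K :=
    le_antisymm (Submodule.span_le.2 fun v hv => (hK v).2 hv.1)
      ((Submodule.span_inter_eq_of_isOpen hO ((hK y).2 hyk) hyO).ge.trans
        (Submodule.span_mono hKO))
  have hK0 : innerₛₗ ℝ (e k) ≠ 0 := fun h => hk (by simpa using congrArg (· (e k)) h)
  rw [IsWall, fdim, hspan, ← Module.Dual.finrank_ker_add_one_of_ne_zero hK0]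
  rfl

theorem exists_pos_inner_generic (hint : ∃ b, ∀ i, 0 < ⟪e i, b⟫) (v : E) :
    ∃ b, (∀ i, 0 < ⟪e i, b⟫) ∧ ∀ i k, ⟪e i, v⟫ * ⟪e k, b⟫ = ⟪e k, v⟫ * ⟪e i, b⟫ →
      ⟪e i, v⟫ • e k = ⟪e k, v⟫ • e i := by
  let w : κ × κ → E := fun p => ⟪e p.1, v⟫ • e p.2 - ⟪e p.2, v⟫ • e p.1
  obtain ⟨b, hbU, hgen⟩ := exists_mem_forall_inner_ne_zero (w := fun p : {p // w p ≠ 0} => w p)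
    (fun p => p.2) (U := ⋂ i, {z | 0 < ⟪e i, z⟫})
    (isOpen_iInter_of_finite fun i => isOpen_lt continuous_const (by fun_prop))
    (hint.imp fun _ h => Set.mem_iInter.2 h)
  refine ⟨b, Set.mem_iInter.1 hbU, fun i k hik => sub_eq_zero.1 ?_⟩
  by_contra hw
  refine hgen ⟨(i, k), hw⟩ ?_
  simp only [w, inner_sub_left, real_inner_smul_left]
  linarith

theorem mem_iInter_posHalf_of_forall_isWall (hint : ∃ b, ∀ i, 0 < ⟪e i, b⟫) {v : E}
    (hv : ∀ i, IsWall e (⋂ i, posHalf e i) i → 0 ≤ ⟪e i, v⟫) : v ∈ ⋂ i, posHalf e i := by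
  by_contra hvB
  obtain ⟨j, hj⟩ : ∃ j, ⟪e j, v⟫ < 0 := by simpa [posHalf] using hvB
  obtain ⟨b, hb, hgen⟩ := exists_pos_inner_generic hint v
  -- `v + S • b` is the first point of the ray `v + t • b` in the cone, reached through `H k`
  have : Nonempty κ := ⟨j⟩
  obtain ⟨k, hk⟩ := Finite.exists_max fun i => -⟪e i, v⟫ / ⟪e i, b⟫
  set S := -⟪e k, v⟫ / ⟪e k, b⟫
  have hS : 0 < S := (div_pos (neg_pos.2 hj) (hb j)).trans_le (hk j)
  have hy : ∀ i, ⟪e i, v + S • b⟫ = ⟪e i, v⟫ + S * ⟪e i, b⟫ := fun i => by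
    rw [inner_add_right, real_inner_smul_right]
  have hvk : ⟪e k, v⟫ = -(S * ⟪e k, b⟫) := by
    rw [div_mul_cancel₀ _ (hb k).ne', neg_neg]
  clear_value S
  have hact : ∀ i, ⟪e i, v + S • b⟫ = 0 → ∀ z, ⟪e k, z⟫ = 0 → ⟪e i, z⟫ = 0 := by
    intro i hi z hz
    rw [hy] at hi
    have hcross : ⟪e i, v⟫ * ⟪e k, b⟫ = ⟪e k, v⟫ * ⟪e i, b⟫ := by
      linear_combination ⟪e k, b⟫ * hi - ⟪e i, b⟫ * hvk
    have hpar := congrArg (⟪·, z⟫) (hgen i k hcross)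
    simp only [real_inner_smul_left, hz, mul_zero] at hpar
    exact (mul_eq_zero.1 hpar.symm).resolve_left (by nlinarith [hb k])
  have hwall : IsWall e (⋂ i, posHalf e i) k := by
    refine isWall_iInter_posHalf (fun h => (hb k).ne' (by simp [h])) (fun i => ?_)
      (by rw [hy, hvk]; ring) hact
    have := hk i
    rw [div_le_iff₀ (hb i)] at this
    rw [hy]
    linarith
  nlinarith [hv k hwall, hb k]

end Walls

theorem stmt7_general (e : ι → V) (B : Set V)
    (hB : IsRegion e B) (hBpos : ∀ i, B ⊆ posHalf e i)
    (F : Set V) (hF : IsFace e F) :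
    ((F ⊆ B) ↔ (∀ i, IsWall e B i → 0 ≤ covec e F i)) ∧
    ((F ⊆ B) ↔ (∀ i, 0 ≤ covec e F i)) := by
  obtain ⟨b, hb, rfl⟩ := hB.exists_pos_eq_iInter_posHalf hBpos
  have hcovec : ∀ i, 0 ≤ covec e F i ↔ F ⊆ posHalf e i := fun i =>
    covec_nonneg_iff hF.convex ⟨0, hF.zero_mem⟩ (hF.subset_posHalf_or_subset_negHalf i)
  have hall : F ⊆ ⋂ i, posHalf e i ↔ ∀ i, 0 ≤ covec e F i := by
    simp only [Set.subset_iInter_iff, hcovec]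
  refine ⟨⟨fun h i _ => hall.1 h i, fun h v hv => ?_⟩, hall⟩
  exact mem_iInter_posHalf_of_forall_isWall ⟨b, hb⟩ fun i hi => (hcovec i).1 (h i hi) hv

/-- `F ⊆ B` iff `F(H) ≥ 0` for every wall of `B` iff `F(H) ≥ 0` for every `H ∈ 𝒜`. -/
theorem stmt7 (e : ι → V) (hne : ∀ i, e i ≠ 0) (B : Set V)
    (hB : IsRegion e B) (hBpos : ∀ i, B ⊆ posHalf e i)
    (F : Set V) (hF : IsFace e F) :
    ((F ⊆ B) ↔ (∀ i, IsWall e B i → 0 ≤ covec e F i)) ∧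
    ((F ⊆ B) ↔ (∀ i, 0 ≤ covec e F i)) :=
  stmt7_general e B hB hBpos F hF
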